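/- If the orthogonal projections onto subspaces h₁ and h₂ commute, then for any unit vector s: ⟨s, Π(h₁ ⊔ h₂) s⟩ ≥ (⟨s,Π(h₁)s⟩ + ⟨s,Π(h₂)s⟩)² / (⟨s,Π(h₁)s⟩ + ⟨s,Π(h₂)s⟩ + 2⟨s,Π(h₁ ⊓ h₂)s⟩), provided the denominator is nonzero (quantum Chung–Erdős inequality in the commuting case). -/

import Mathlib

/-!
The vector `x = Π(h₁) s + Π(h₂) s` lies in `h₁ ⊔ h₂`, and `⟨s, x⟩ = ⟨s,Π(h₁)s⟩ + ⟨s,Π(h₂)s⟩`.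
When the projections commute, `Π(h₁ ⊓ h₂) = Π(h₁) Π(h₂)`, so the cross term of `‖x‖²` is
`2⟨s,Π(h₁ ⊓ h₂)s⟩` and `‖x‖²` is the denominator. Cauchy–Schwarz for the pairing of `x` with
`Π(h₁ ⊔ h₂) s` then gives `⟨s, x⟩² ≤ ⟨s,Π(h₁ ⊔ h₂)s⟩ ‖x‖²`.
-/

variable {H : Type*} [NormedAddCommGroup H] [InnerProductSpace ℂ H] [FiniteDimensional ℂ H]

/-- The orthogonal projection onto a subspace, as an operator on `H`. -/
noncomputable def projOp (h : Submodule ℂ H) : H →ₗ[ℂ] H :=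
  (h.subtypeL.comp h.orthogonalProjection).toLinearMap

/-- The quantum correction operator `D(h₁,h₂)`. -/
noncomputable def Dop (h₁ h₂ : Submodule ℂ H) : H →ₗ[ℂ] H :=
  projOp (h₁ ⊔ h₂) - projOp h₁ - projOp h₂ + projOp (h₁ ⊓ h₂)

open RCLike

namespace Submodule

variable {𝕜 E : Type*} [RCLike 𝕜] [NormedAddCommGroup E] [InnerProductSpace 𝕜 E]

local notation "⟪" x ", " y "⟫" => inner 𝕜 x y

lemma re_inner_starProjection_right_eq_norm_sq (K : Submodule 𝕜 E) [K.HasOrthogonalProjection]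
    (v : E) : re ⟪v, K.starProjection v⟫ = ‖K.starProjection v‖ ^ 2 := by
  rw [← inner_starProjection_left_eq_right, re_inner_starProjection_eq_normSq,
    starProjection_apply, norm_coe]

lemma inner_starProjection_left_of_mem (K : Submodule 𝕜 E) [K.HasOrthogonalProjection]
    {x : E} (hx : x ∈ K) (s : E) : ⟪K.starProjection s, x⟫ = ⟪s, x⟫ := by
  rw [inner_starProjection_left_eq_right, starProjection_eq_self_iff.2 hx]

lemma sq_re_inner_le_re_inner_starProjection_mul_norm_sq (K : Submodule 𝕜 E)
    [K.HasOrthogonalProjection] {x : E} (hx : x ∈ K) (s : E) :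
    re ⟪s, x⟫ ^ 2 ≤ re ⟪s, K.starProjection s⟫ * ‖x‖ ^ 2 := by
  rw [re_inner_starProjection_right_eq_norm_sq, ← mul_pow,
    ← inner_starProjection_left_of_mem K hx]
  exact sq_le_sq' (neg_le_of_abs_le ((abs_re_le_norm _).trans (norm_inner_le_norm _ _)))
    ((re_le_norm _).trans (norm_inner_le_norm _ _))

variable (K₁ K₂ : Submodule 𝕜 E) [K₁.HasOrthogonalProjection] [K₂.HasOrthogonalProjection]

lemma starProjection_inf_apply_of_commute [(K₁ ⊓ K₂).HasOrthogonalProjection]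
    (hcomm : Commute K₁.starProjection K₂.starProjection) (x : E) :
    (K₁ ⊓ K₂).starProjection x = K₁.starProjection (K₂.starProjection x) := by
  have hmem₂ : K₁.starProjection (K₂.starProjection x) ∈ K₂ := by
    have hswap : K₁.starProjection (K₂.starProjection x) =
        K₂.starProjection (K₁.starProjection x) := DFunLike.congr_fun hcomm.eq x
    rw [hswap]
    exact K₂.starProjection_apply_mem _
  refine eq_starProjection_of_mem_of_inner_eq_zero ⟨K₁.starProjection_apply_mem _, hmem₂⟩ ?_
  rintro w ⟨hw₁, hw₂⟩
  rw [inner_sub_left, inner_starProjection_left_of_mem K₁ hw₁,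
    inner_starProjection_left_of_mem K₂ hw₂, sub_self]

lemma norm_starProjection_add_starProjection_sq_of_commute [(K₁ ⊓ K₂).HasOrthogonalProjection]
    (hcomm : Commute K₁.starProjection K₂.starProjection) (s : E) :
    ‖K₁.starProjection s + K₂.starProjection s‖ ^ 2 =
      re ⟪s, K₁.starProjection s⟫ + re ⟪s, K₂.starProjection s⟫
        + 2 * re ⟪s, (K₁ ⊓ K₂).starProjection s⟫ := by
  rw [norm_add_sq (𝕜 := 𝕜), re_inner_starProjection_right_eq_norm_sq,
    re_inner_starProjection_right_eq_norm_sq, starProjection_inf_apply_of_commute K₁ K₂ hcomm,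
    K₁.inner_starProjection_left_eq_right]
  ring

theorem sq_add_div_le_re_inner_starProjection_sup_of_commute
    [(K₁ ⊓ K₂).HasOrthogonalProjection] [(K₁ ⊔ K₂).HasOrthogonalProjection]
    (hcomm : Commute K₁.starProjection K₂.starProjection) (s : E) :
    (re ⟪s, K₁.starProjection s⟫ + re ⟪s, K₂.starProjection s⟫) ^ 2 /
        (re ⟪s, K₁.starProjection s⟫ + re ⟪s, K₂.starProjection s⟫
          + 2 * re ⟪s, (K₁ ⊓ K₂).starProjection s⟫) ≤
      re ⟪s, (K₁ ⊔ K₂).starProjection s⟫ := by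
  have hx : K₁.starProjection s + K₂.starProjection s ∈ K₁ ⊔ K₂ :=
    add_mem_sup (K₁.starProjection_apply_mem s) (K₂.starProjection_apply_mem s)
  have hsx : re ⟪s, K₁.starProjection s + K₂.starProjection s⟫ =
      re ⟪s, K₁.starProjection s⟫ + re ⟪s, K₂.starProjection s⟫ := by
    rw [inner_add_right, map_add]
  rw [← norm_starProjection_add_starProjection_sq_of_commute K₁ K₂ hcomm, ← hsx]
  exact div_le_of_le_mul₀ (sq_nonneg _)
    (by rw [re_inner_starProjection_right_eq_norm_sq]; positivity)
    (sq_re_inner_le_re_inner_starProjection_mul_norm_sq _ hx s)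

end Submodule

theorem stmt_10_general (h₁ h₂ : Submodule ℂ H)
    (hcomm : projOp h₁ ∘ₗ projOp h₂ = projOp h₂ ∘ₗ projOp h₁)
    (s : H) :
    (inner ℂ s (projOp (h₁ ⊔ h₂) s) : ℂ).re ≥
      ((inner ℂ s (projOp h₁ s) : ℂ).re + (inner ℂ s (projOp h₂ s) : ℂ).re) ^ 2 /
        ((inner ℂ s (projOp h₁ s) : ℂ).re + (inner ℂ s (projOp h₂ s) : ℂ).re
          + 2 * (inner ℂ s (projOp (h₁ ⊓ h₂) s) : ℂ).re) :=
  h₁.sq_add_div_le_re_inner_starProjection_sup_of_commute h₂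
    (ContinuousLinearMap.coe_injective hcomm) s

theorem stmt_10 (h₁ h₂ : Submodule ℂ H)
    (hcomm : projOp h₁ ∘ₗ projOp h₂ = projOp h₂ ∘ₗ projOp h₁)
    (s : H) (hs : ‖s‖ = 1)
    (hden : (inner ℂ s (projOp h₁ s) : ℂ).re + (inner ℂ s (projOp h₂ s) : ℂ).re
        + 2 * (inner ℂ s (projOp (h₁ ⊓ h₂) s) : ℂ).re ≠ 0) :
    (inner ℂ s (projOp (h₁ ⊔ h₂) s) : ℂ).re ≥
      ((inner ℂ s (projOp h₁ s) : ℂ).re + (inner ℂ s (projOp h₂ s) : ℂ).re) ^ 2 /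
        ((inner ℂ s (projOp h₁ s) : ℂ).re + (inner ℂ s (projOp h₂ s) : ℂ).re
          + 2 * (inner ℂ s (projOp (h₁ ⊓ h₂) s) : ℂ).re) :=
  stmt_10_general h₁ h₂ hcomm s
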